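/- Let k ≥ 2 and c > 0. Let G_1, …, G_{k−1} be independent real-valued random variables, each with a law absolutely continuous with respect to Lebesgue measure with density bounded above by c. Let λ_1, …, λ_k and ν_1, …, ν_k be integers and suppose L := max_{1≤i≤k−1} |λ_i − ν_i| > 0. Then P( λ_k + Σ_{i=1}^{k−1} ⌊G_i λ_i⌋ = ν_k + Σ_{i=1}^{k−1} ⌊G_i ν_i⌋ ) ≤ 2·k·c / L. -/

import Mathlib

open MeasureTheory ProbabilityTheory
open scoped ENNReal

/-!
Fix a coordinate `i` with `|λ_i - ν_i| = L`. Alignment says that the integer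
`⌊G_i λ_i⌋ - ⌊G_i ν_i⌋` equals a quantity determined by the other gains, which are independent
of `G_i`. For each fixed integer value `m`, the set of `x` with `⌊x λ_i⌋ - ⌊x ν_i⌋ = m` lies in an
interval of length `2 / L`, so it has probability at most `2c / L` under a density bounded by `c`;
averaging over the value of the independent part keeps that bound.
-/

namespace ProbabilityTheory

variable {Ω : Type*} [MeasurableSpace Ω] {μ : Measure Ω} [IsProbabilityMeasure μ]

theorem IndepFun.measure_eq_le {β : Type*} [MeasurableSpace β] [MeasurableSingletonClass β]
    [Countable β] {X Y : Ω → β} (hXY : IndepFun X Y μ) (hY : Measurable Y) {ε : ℝ≥0∞}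
    (hε : ∀ b, μ (X ⁻¹' {b}) ≤ ε) : μ {ω | X ω = Y ω} ≤ ε :=
  calc μ {ω | X ω = Y ω} = μ (⋃ b, X ⁻¹' {b} ∩ Y ⁻¹' {b}) := by
        congr 1; ext ω; simp [eq_comm]
    _ ≤ ∑' b, μ (X ⁻¹' {b}) * μ (Y ⁻¹' {b}) := by
        simpa only [hXY.measure_inter_preimage_eq_mul _ _ (measurableSet_singleton _)
          (measurableSet_singleton _)] using
          measure_iUnion_le (μ := μ) fun b => X ⁻¹' {b} ∩ Y ⁻¹' {b}
    _ ≤ ∑' b, ε * μ (Y ⁻¹' {b}) := by gcongr with b; exact hε b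
    _ = ε := by
        rw [ENNReal.tsum_mul_left, ← measure_iUnion (pairwise_disjoint_fiber Y)
          (fun b => hY (measurableSet_singleton b)), ← Set.preimage_iUnion,
          Set.iUnion_of_singleton, Set.preimage_univ, measure_univ, mul_one]

theorem iIndepFun.measure_sum_eq_le {ι β : Type*} [Fintype ι] [AddCommGroup β]
    [MeasurableSpace β] [MeasurableSingletonClass β] [MeasurableAdd₂ β] [MeasurableSub₂ β]
    [Countable β] {X : ι → Ω → β} (hX : iIndepFun X μ) (hXm : ∀ i, Measurable (X i)) (i : ι)
    {ε : ℝ≥0∞} (hε : ∀ b, μ (X i ⁻¹' {b}) ≤ ε) (n : β) : μ {ω | ∑ j, X j ω = n} ≤ ε := by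
  classical
  have hindep : IndepFun (X i) (fun ω => n - ∑ j ∈ Finset.univ.erase i, X j ω) μ := by
    simpa only [Function.comp_def, Finset.sum_apply, id] using
      (hX.indepFun_finsetSum_of_notMem hXm (Finset.notMem_erase i _)).symm.comp measurable_id
        (measurable_id.const_sub n)
  refine le_of_eq_of_le (congrArg μ (Set.ext fun ω => ?_)) (hindep.measure_eq_le (by fun_prop) hε)
  change ∑ j, X j ω = n ↔ X i ω = n - ∑ j ∈ Finset.univ.erase i, X j ω
  rw [eq_sub_iff_add_eq, add_comm, Finset.sum_erase_add _ _ (Finset.mem_univ i)]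

end ProbabilityTheory

theorem measurable_floor_mul_sub_floor_mul (a b : ℝ) :
    Measurable fun x : ℝ => ⌊x * a⌋ - ⌊x * b⌋ := by
  fun_prop

theorem floor_mul_sub_floor_mul_eq_subset_ball {a b : ℝ} (hab : a ≠ b) (m : ℤ) :
    {x : ℝ | ⌊x * a⌋ - ⌊x * b⌋ = m} ⊆ Metric.ball (m / (a - b)) (1 / |a - b|) := by
  intro x hx
  have hd : 0 < |a - b| := abs_pos.mpr (sub_ne_zero.mpr hab)
  have hm : (m : ℝ) = ⌊x * a⌋ - ⌊x * b⌋ := by rw [← hx]; push_cast; ring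
  have hclose : |x * (a - b) - m| < 1 := by
    rw [abs_lt, hm]
    constructor <;> linarith [Int.floor_le (x * a), Int.lt_floor_add_one (x * a),
      Int.floor_le (x * b), Int.lt_floor_add_one (x * b)]
  rw [Metric.mem_ball, Real.dist_eq, lt_div_iff₀ hd, ← abs_mul, sub_mul,
    div_mul_cancel₀ _ (sub_ne_zero.mpr hab)]
  exact hclose

theorem measure_floor_mul_sub_floor_mul_eq_le {Ω : Type*} [MeasurableSpace Ω] {μ : Measure Ω}
    {X : Ω → ℝ} (hX : Measurable X) {c : ℝ}
    (hdens : ∀ s : Set ℝ, MeasurableSet s → μ.map X s ≤ ENNReal.ofReal c * volume s)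
    {a b : ℝ} (hab : a ≠ b) (m : ℤ) :
    μ {ω | ⌊X ω * a⌋ - ⌊X ω * b⌋ = m} ≤ ENNReal.ofReal (2 * c / |a - b|) := by
  have hs : MeasurableSet {x : ℝ | ⌊x * a⌋ - ⌊x * b⌋ = m} :=
    measurable_floor_mul_sub_floor_mul a b (measurableSet_singleton m)
  calc μ {ω | ⌊X ω * a⌋ - ⌊X ω * b⌋ = m} = μ.map X {x | ⌊x * a⌋ - ⌊x * b⌋ = m} :=
        (Measure.map_apply hX hs).symm
    _ ≤ ENNReal.ofReal c * volume (Metric.ball (m / (a - b)) (1 / |a - b|)) :=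
        (hdens _ hs).trans (by gcongr; exact floor_mul_sub_floor_mul_eq_subset_ball hab m)
    _ = ENNReal.ofReal (2 * c / |a - b|) := by
        rw [Real.volume_ball, ← ENNReal.ofReal_mul' (by positivity)]
        ring_nf

/-- Probability of image alignment at user `k`: if the integer inputs of the two
realizations differ by `L > 0` in some coordinate, the probability that the two floor-sum
outputs coincide is at most `2kc/L`. -/
theorem prob_image_alignment {Ω : Type*} [MeasurableSpace Ω]
    (μ : Measure Ω) [IsProbabilityMeasure μ]
    (k : ℕ) (hk : 2 ≤ k) (c : ℝ) (hc : 0 < c)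
    (G : Fin (k - 1) → Ω → ℝ) (hG : ∀ i, Measurable (G i))
    (hindep : iIndepFun G μ)
    (hdens : ∀ i, ∀ s : Set ℝ, MeasurableSet s →
      (μ.map (G i)) s ≤ ENNReal.ofReal c * volume s)
    (lam nu : Fin (k - 1) → ℤ) (lamk nuk : ℤ)
    (L : ℤ)
    (hLdef : L = Finset.univ.sup' ⟨⟨0, by omega⟩, Finset.mem_univ _⟩
      fun i => |lam i - nu i|)
    (hL : 0 < L) :
    μ {ω | lamk + ∑ i, ⌊G i ω * (lam i : ℝ)⌋ = nuk + ∑ i, ⌊G i ω * (nu i : ℝ)⌋}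
      ≤ ENNReal.ofReal (2 * (k : ℝ) * c / (L : ℝ)) := by
  obtain ⟨i₀, -, hi₀⟩ := Finset.exists_mem_eq_sup' ⟨⟨0, by omega⟩, Finset.mem_univ _⟩
    fun i => |lam i - nu i|
  have hLi₀ : |(lam i₀ : ℝ) - nu i₀| = L := by rw [hLdef.trans hi₀]; push_cast; rfl
  have hne : (lam i₀ : ℝ) ≠ nu i₀ := fun h => by
    rw [h, sub_self, abs_zero] at hLi₀
    exact hL.ne (by exact_mod_cast hLi₀)
  have hevent : {ω | lamk + ∑ i, ⌊G i ω * (lam i : ℝ)⌋ = nuk + ∑ i, ⌊G i ω * (nu i : ℝ)⌋}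
      = {ω | ∑ i, (⌊G i ω * (lam i : ℝ)⌋ - ⌊G i ω * (nu i : ℝ)⌋) = nuk - lamk} := by
    ext ω
    simp only [Set.mem_ofPred_eq, Finset.sum_sub_distrib]
    omega
  have hsum := (hindep.comp _ fun i => measurable_floor_mul_sub_floor_mul (lam i) (nu i))
    |>.measure_sum_eq_le (fun i => (measurable_floor_mul_sub_floor_mul _ _).comp (hG i)) i₀
      (measure_floor_mul_sub_floor_mul_eq_le (hG i₀) (hdens i₀) hne) (nuk - lamk)
  rw [hevent, ← hLi₀]
  refine hsum.trans (ENNReal.ofReal_le_ofReal ?_)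
  gcongr
  norm_cast
  omega
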